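/- Let $K$ be a field of characteristic $0$, $\beta \in K$, $A \in M_l(K)$, and let $f, r \geq 1$ with $m = f + r$. Define $g^j_{m,f,i} = \frac{\beta^{j-i-1}}{j\,(j-i-1)!}(m-(f+1))(m-(f+2))\cdots(m-(f+j-i-1))$ for $i+1 \leq j \leq m-f+i$ and $g^j_{m,f,i} = 0$ otherwise. Then for all $s \geq 0$ and $i \geq 0$: $\sum_{c=0}^{s-1} \Big(\prod_{t=f+1}^{m-1}(-t\beta + A + c\beta)\Big) c(c-1)\cdots(c-i+1) = \sum_{j=1}^{m-f+i} g^j_{m,f,i}\Big(\prod_{t=f-i+1}^{m-j}(-t\beta + A)\Big) s(s-1)\cdots(s-(j-1))$, where empty products are the identity matrix. -/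

import Mathlib

open Finset Polynomial

lemma vdm {R : Type*} [CommRing R] (b u v : R) :
    ∀ n : ℕ, ∏ t ∈ range n, (u + v - (t : R) * b)
      = ∑ k ∈ range (n+1), (n.choose k : R) * ((∏ t ∈ range k, (u - (t:R)*b)) *
          ∏ t ∈ range (n-k), (v - (t:R)*b)) := by
  have P : ℕ → R := fun k => ∏ t ∈ range k, (u - (t:R)*b)
  intro n
  induction n with
  | zero => simp
  | succ n ih =>
    set P : ℕ → R := fun k => ∏ t ∈ range k, (u - (t:R)*b) with hP
    set Q : ℕ → R := fun k => ∏ t ∈ range k, (v - (t:R)*b) with hQ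
    have hPs : ∀ k, P (k+1) = P k * (u - (k:R)*b) := fun k => prod_range_succ _ _
    have hQs : ∀ k, Q (k+1) = Q k * (v - (k:R)*b) := fun k => prod_range_succ _ _
    rw [prod_range_succ, ih, sum_mul]
    have key : ∀ k ∈ range (n+1),
        (n.choose k : R) * (P k * Q (n-k)) * (u + v - (n:R) * b)
        = (n.choose k : R) * (P (k+1) * Q (n-k)) + (n.choose k : R) * (P k * Q (n-k+1)) := by
      intro k hk
      have hk' : k ≤ n := Nat.lt_succ_iff.mp (mem_range.mp hk)
      have h1 : (u + v - (n:R) * b) = (u - (k:R)*b) + (v - ((n-k : ℕ):R)*b) := by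
        have : ((n - k : ℕ) : R) = (n : R) - (k : R) := by push_cast [hk']; ring
        rw [this]; ring
      rw [h1, hPs, hQs]; ring
    have e3 : ∑ k ∈ range (n+1), ((n.choose k : R)) * (P k * Q (n-k+1))
        = (∑ k ∈ range n, ((n.choose (k+1) : R)) * (P (k+1) * Q (n-k))) + Q (n+1) := by
      rw [Finset.sum_range_succ']
      congr 1
      · refine sum_congr rfl fun k hk => ?_
        have hk' : k < n := mem_range.mp hk
        have : n - (k+1) + 1 = n - k := by omega
        rw [this]
      · simp [hP, hQ]
    rw [sum_congr rfl key, sum_add_distrib, e3]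
    have e1 : ∑ k ∈ range (n+1+1), ((n+1).choose k : R) * (P k * Q (n+1-k))
        = (∑ k ∈ range (n+1), (((n.choose k : R)) * (P (k+1) * Q (n-k))
            + ((n.choose (k+1) : R)) * (P (k+1) * Q (n-k)))) + Q (n+1) := by
      rw [Finset.sum_range_succ']
      congr 1
      · refine sum_congr rfl fun k hk => ?_
        rw [Nat.choose_succ_succ, Nat.succ_sub_succ]
        push_cast
        ring
      · simp [hP, hQ]
    have e2 : ∑ k ∈ range (n+1), ((n.choose (k+1) : R)) * (P (k+1) * Q (n-k))
        = ∑ k ∈ range n, ((n.choose (k+1) : R)) * (P (k+1) * Q (n-k)) := by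
      rw [Finset.sum_range_succ]
      simp
    rw [e1, sum_add_distrib, e2]
    ring

lemma listprod_eq_prod {M : Type*} [CommMonoid M] (f : ℕ → M) (n : ℕ) :
    ((List.range n).map f).prod = ∏ i ∈ range n, f i := by
  induction n with
  | zero => simp
  | succ n ih =>
    rw [List.range_succ, List.map_append, List.prod_append, prod_range_succ, ih]
    simp

-- falling factorial in K
lemma fall_split {K : Type*} [Field K] (s i k : ℕ) :
    ∏ u ∈ range (i + k), ((s:K) - u)
      = (∏ u ∈ range i, ((s:K) - u)) * ∏ t ∈ range k, (((s:K) - (i:K)) - t) := by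
  rw [Finset.prod_range_add]
  congr 1
  refine prod_congr rfl fun t _ => ?_
  push_cast
  ring

lemma fall_succ {K : Type*} [Field K] (s j : ℕ) :
    (∏ u ∈ range (j+1), (((s:K)+1) - u))
      = ∏ u ∈ range (j+1), ((s:K)-u) + ((j:K)+1) * ∏ u ∈ range j, ((s:K)-u) := by
  rw [Finset.prod_range_succ' (fun u => ((s:K)+1) - (u:K)), prod_range_succ]
  have : ∀ u ∈ range j, ((s:K)+1) - ((u:ℕ)+1 : ℕ) = (s:K) - u := by
    intro u _; push_cast; ring
  rw [prod_congr rfl this]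
  push_cast
  ring

lemma prodIcc {K : Type*} [Field K] [CharZero K] (r : ℕ) (hr : 1 ≤ r) :
    ∀ k, k < r → ∏ v ∈ Icc 1 k, ((r:K) - (v:K)) = ((r-1).descFactorial k : K) := by
  intro k
  induction k with
  | zero => simp
  | succ k ih =>
    intro hk
    rw [Finset.prod_Icc_succ_top (by omega : 1 ≤ k+1), ih (by omega), Nat.descFactorial_succ]
    have hc : ((r - 1 - k : ℕ) : K) = (r:K) - ((k:K)+1) := by
      have h : (r - 1 - k) + (k + 1) = r := by omega
      have h' := congrArg (fun n : ℕ => (n:K)) h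
      push_cast at h'
      linear_combination h'
    push_cast
    rw [hc]
    ring

lemma gj {K : Type*} [Field K] [CharZero K] (f r : ℕ) (β : K) (g : ℕ → ℕ → K)
    (hg1 : ∀ i j, i + 1 ≤ j → j ≤ r + i →
      g i j = β ^ (j - i - 1) / ((j : K) * (Nat.factorial (j - i - 1) : K)) *
        ∏ v ∈ Finset.Icc 1 (j - i - 1), (((f + r : ℕ) : K) - ((f : K) + (v : K))))
    (i j : ℕ) (h1 : i + 1 ≤ j) (h2 : j ≤ r + i) :
    g i j * (j : K) = ((r-1).choose (j-i-1) : K) * β ^ (j-i-1) := by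
  have hk : j - i - 1 < r := by omega
  rw [hg1 i j h1 h2]
  have hp : ∏ v ∈ Icc 1 (j-i-1), (((f+r:ℕ):K) - ((f:K)+(v:K)))
      = (((r-1).descFactorial (j-i-1) : ℕ) : K) := by
    rw [← prodIcc r (by omega) (j-i-1) hk]
    refine prod_congr rfl fun v _ => ?_
    push_cast; ring
  rw [hp, Nat.descFactorial_eq_factorial_mul_choose]
  have hj : (j:K) ≠ 0 := Nat.cast_ne_zero.mpr (by omega)
  have hf : (((j-i-1).factorial : ℕ):K) ≠ 0 := Nat.cast_ne_zero.mpr (j-i-1).factorial_ne_zero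
  field_simp
  push_cast
  ring

lemma stepKey {K : Type*} [Field K] [CharZero K] (f r : ℕ) (hr : 1 ≤ r) (β : K)
    (g : ℕ → ℕ → K)
    (hg1 : ∀ i j, i + 1 ≤ j → j ≤ r + i →
      g i j = β ^ (j - i - 1) / ((j : K) * (Nat.factorial (j - i - 1) : K)) *
        ∏ v ∈ Finset.Icc 1 (j - i - 1), (((f + r : ℕ) : K) - ((f : K) + (v : K))))
    (hg2 : ∀ i j, j < i + 1 ∨ r + i < j → g i j = 0) (s i : ℕ) :
    (C (∏ u ∈ range i, ((s:K) - (u:K))) : K[X]) *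
        ∏ t ∈ range (r-1), (X + C (((s:K) - ((f:K)+1+(t:K)))*β))
      = ∑ j ∈ Icc 1 (r+i),
          C (g i j * (j:K) * ∏ u ∈ range (j-1), ((s:K) - (u:K))) *
            ∏ t ∈ range (r+i-j), (X + C (-(((f:K) - (i:K) + 1 + (t:K))*β))) := by
  have hL : ∏ t ∈ range (r-1), (X + C (((s:K) - ((f:K)+1+(t:K)))*β))
      = ∏ t ∈ range (r-1), (C (((s:K)-(i:K))*β) + (X - C (((f:K)-(i:K)+1)*β)) - (t:K[X]) * C β) := by
    refine prod_congr rfl fun t _ => ?_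
    rw [← map_natCast (C : K →+* K[X]) t]
    simp only [C_sub, C_add, C_mul, C_1, map_natCast]
    ring
  rw [hL, vdm (C β) (C (((s:K)-(i:K))*β)) (X - C (((f:K)-(i:K)+1)*β)) (r-1)]
  have hrr : r - 1 + 1 = r := by omega
  rw [hrr, Finset.mul_sum]
  have hsub : Icc (i+1) (r+i) ⊆ Icc 1 (r+i) := by
    intro j hj; rw [mem_Icc] at *; omega
  rw [← Finset.sum_subset hsub (by
    intro j hj hj'
    rw [mem_Icc] at hj; rw [mem_Icc] at hj'
    have : g i j = 0 := hg2 i j (by omega)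
    rw [this]
    simp)]
  rw [show Icc (i+1) (r+i) = Finset.map ⟨fun k => i+1+k, add_right_injective (i+1)⟩ (range r) by
    ext j
    simp only [mem_Icc, Finset.mem_map, mem_range, Function.Embedding.coeFn_mk]
    constructor
    · intro h; exact ⟨j - (i+1), by omega, by omega⟩
    · rintro ⟨k, hk, rfl⟩; omega]
  rw [Finset.sum_map]
  refine sum_congr rfl fun k hk => ?_
  rw [mem_range] at hk
  simp only [Function.Embedding.coeFn_mk]
  have hgk : g i (i+1+k) * ((i+1+k : ℕ):K) = (((r-1).choose k : ℕ) : K) * β ^ k := by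
    have h := gj f r β g hg1 i (i+1+k) (by omega) (by omega)
    have e : i+1+k-i-1 = k := by omega
    rw [e] at h
    exact h
  have hP : ∏ t ∈ range k, (C (((s:K)-(i:K))*β) - (t:K[X]) * C β)
      = C (β^k * ∏ t ∈ range k, (((s:K) - (i:K)) - (t:K))) := by
    have h1 : ∀ t ∈ range k, C (((s:K)-(i:K))*β) - (t:K[X]) * C β
        = C ((((s:K) - (i:K)) - (t:K)) * β) := by
      intro t _
      rw [← map_natCast (C : K →+* K[X]) t, ← C_mul, ← C_sub]
      congr 1
      ring
    rw [prod_congr rfl h1, ← map_prod]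
    congr 1
    rw [Finset.prod_mul_distrib, Finset.prod_const, card_range, mul_comm]
  have hQ : ∀ n : ℕ, ∏ t ∈ range n, ((X - C (((f:K)-(i:K)+1)*β)) - (t:K[X]) * C β)
      = ∏ t ∈ range n, (X + C (-(((f:K) - (i:K) + 1 + (t:K))*β))) := by
    intro n
    refine prod_congr rfl fun t _ => ?_
    rw [← map_natCast (C : K →+* K[X]) t]
    simp only [C_neg, C_sub, C_add, C_mul, C_1, map_natCast]
    ring
  have hidx1 : i + 1 + k - 1 = i + k := by omega
  have hidx2 : r + i - (i+1+k) = r - 1 - k := by omega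
  have h3 : (((r-1).choose k : ℕ) : K[X]) = C ((((r-1).choose k : ℕ)) : K) :=
    (map_natCast (C : K →+* K[X]) _).symm
  rw [hidx1, hidx2, hQ, hP, hgk, fall_split s i k, h3]
  simp only [C_mul]
  ring

lemma polyMain {K : Type*} [Field K] [CharZero K] (f r : ℕ) (hr : 1 ≤ r) (β : K)
    (g : ℕ → ℕ → K)
    (hg1 : ∀ i j, i + 1 ≤ j → j ≤ r + i →
      g i j = β ^ (j - i - 1) / ((j : K) * (Nat.factorial (j - i - 1) : K)) *
        ∏ v ∈ Finset.Icc 1 (j - i - 1), (((f + r : ℕ) : K) - ((f : K) + (v : K))))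
    (hg2 : ∀ i j, j < i + 1 ∨ r + i < j → g i j = 0) :
    ∀ s i : ℕ,
      ∑ c ∈ range s, (C (∏ u ∈ range i, ((c:K)-(u:K))) : K[X]) *
          ∏ t ∈ range (r-1), (X + C (((c:K) - ((f:K)+1+(t:K)))*β))
      = ∑ j ∈ Icc 1 (r+i),
          C (g i j * ∏ u ∈ range j, ((s:K)-(u:K))) *
            ∏ t ∈ range (r+i-j), (X + C (-(((f:K)-(i:K)+1+(t:K))*β))) := by
  intro s i
  induction s with
  | zero =>
    rw [sum_range_zero]
    symm
    refine sum_eq_zero fun j hj => ?_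
    rw [mem_Icc] at hj
    have h0 : (∏ u ∈ range j, (((0:ℕ):K) - (u:K))) = 0 :=
      prod_eq_zero (i := 0) (mem_range.mpr (by omega)) (by simp)
    rw [h0, mul_zero, map_zero, zero_mul]
  | succ s ih =>
    rw [sum_range_succ, ih, stepKey f r hr β g hg1 hg2 s i, ← sum_add_distrib]
    refine sum_congr rfl fun j hj => ?_
    rw [mem_Icc] at hj
    have hj1 : j - 1 + 1 = j := by omega
    have hfall : ∏ u ∈ range j, (((s+1:ℕ):K) - (u:K))
        = ∏ u ∈ range j, ((s:K)-(u:K)) + (j:K) * ∏ u ∈ range (j-1), ((s:K)-(u:K)) := by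
      have h := fall_succ (K := K) s (j-1)
      rw [hj1] at h
      have hjc : ((j-1:ℕ):K) + 1 = (j:K) := by
        have := congrArg (fun n : ℕ => (n:K)) hj1
        push_cast at this
        linear_combination this
      rw [hjc] at h
      have hcast : ((s+1:ℕ):K) = (s:K)+1 := by push_cast; ring
      rw [hcast]
      exact h
    rw [hfall, mul_add, ← mul_assoc, C_add, add_mul]

lemma aeval_prod_linear {K : Type*} [Field K] (l : ℕ) (A : Matrix (Fin l) (Fin l) K)
    (γ : ℕ → K) (n : ℕ) :
    ((List.range n).map (fun idx => A + (γ idx) • (1 : Matrix (Fin l) (Fin l) K))).prod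
      = Polynomial.aeval A (∏ t ∈ range n, (X + C (γ t))) := by
  rw [← listprod_eq_prod, map_list_prod (Polynomial.aeval A), List.map_map]
  have h : (⇑(Polynomial.aeval A) ∘ fun t : ℕ => X + C (γ t))
      = fun idx => A + γ idx • (1 : Matrix (Fin l) (Fin l) K) := by
    funext t
    simp [Algebra.algebraMap_eq_smul_one]
  rw [h]

lemma aeval_Csmul {K : Type*} [Field K] (l : ℕ) (A : Matrix (Fin l) (Fin l) K)
    (a : K) (p : K[X]) :
    Polynomial.aeval A (C a * p) = a • Polynomial.aeval A p := by
  rw [map_mul, aeval_C, ← Algebra.smul_def]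

/-- Lemma "change m f i order" (`m = f + r`, `f, r ≥ 1`):
`∑_{c=0}^{s-1} (∏_{t=f+1}^{m-1}(-tβ + A + cβ)) · c(c-1)⋯(c-i+1)
  = ∑_{j=1}^{m-f+i} g^j_{m,f,i} (∏_{t=f-i+1}^{m-j}(-tβ + A)) · s(s-1)⋯(s-(j-1))`,
where `g^j_{m,f,i} = β^{j-i-1}/(j (j-i-1)!) · (m-(f+1))⋯(m-(f+j-i-1))` for
`i+1 ≤ j ≤ m-f+i` and `0` otherwise. Matrix products are ordered (list) products. -/
theorem stmt7 (K : Type*) [Field K] [CharZero K] (l f r : ℕ) (hf : 1 ≤ f) (hr : 1 ≤ r)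
    (β : K) (A : Matrix (Fin l) (Fin l) K) (g : ℕ → ℕ → K)
    (hg1 : ∀ i j, i + 1 ≤ j → j ≤ r + i →
      g i j = β ^ (j - i - 1) / ((j : K) * (Nat.factorial (j - i - 1) : K)) *
        ∏ v ∈ Finset.Icc 1 (j - i - 1), (((f + r : ℕ) : K) - ((f : K) + (v : K))))
    (hg2 : ∀ i j, j < i + 1 ∨ r + i < j → g i j = 0) :
    ∀ s i : ℕ,
      ∑ c ∈ Finset.range s,
        (∏ u ∈ Finset.range i, ((c : K) - (u : K))) •
          ((List.range (r - 1)).map (fun idx : ℕ =>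
            A + (((c : K) - ((f : K) + 1 + (idx : K))) * β) • (1 : Matrix (Fin l) (Fin l) K))).prod
      = ∑ j ∈ Finset.Icc 1 (r + i),
          (g i j * ∏ u ∈ Finset.range j, ((s : K) - (u : K))) •
            ((List.range (r + i - j)).map (fun idx : ℕ =>
              A + (-(((f : K) - (i : K) + 1 + (idx : K)) * β)) •
                (1 : Matrix (Fin l) (Fin l) K))).prod := by
  intro s i
  calc
    ∑ c ∈ Finset.range s,
        (∏ u ∈ Finset.range i, ((c : K) - (u : K))) •
          ((List.range (r - 1)).map (fun idx : ℕ =>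
            A + (((c : K) - ((f : K) + 1 + (idx : K))) * β) • (1 : Matrix (Fin l) (Fin l) K))).prod
      = Polynomial.aeval A (∑ c ∈ range s, (C (∏ u ∈ range i, ((c:K)-(u:K))) : K[X]) *
          ∏ t ∈ range (r-1), (X + C (((c:K) - ((f:K)+1+(t:K)))*β))) := by
        rw [map_sum]
        refine sum_congr rfl fun c _ => ?_
        rw [aeval_Csmul, aeval_prod_linear]
    _ = Polynomial.aeval A (∑ j ∈ Icc 1 (r+i),
          C (g i j * ∏ u ∈ range j, ((s:K)-(u:K))) *
            ∏ t ∈ range (r+i-j), (X + C (-(((f:K)-(i:K)+1+(t:K))*β)))) := by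
        rw [polyMain f r hr β g hg1 hg2 s i]
    _ = ∑ j ∈ Finset.Icc 1 (r + i),
          (g i j * ∏ u ∈ Finset.range j, ((s : K) - (u : K))) •
            ((List.range (r + i - j)).map (fun idx : ℕ =>
              A + (-(((f : K) - (i : K) + 1 + (idx : K)) * β)) •
                (1 : Matrix (Fin l) (Fin l) K))).prod := by
        rw [map_sum]
        refine sum_congr rfl fun j _ => ?_
        rw [aeval_Csmul, aeval_prod_linear]
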